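/- arXiv:2312.13710 — 4 statements merged into one kernel-verified Lean document; each statement's English description precedes it below -/
import Mathlib

section
/- If g(t) = (t−t₀)^{2k} log|t−t₀| satisfies g(t)² = α(t) g(t) + β(t) on a punctured neighborhood of t₀ with α, β real analytic at t₀, then a contradiction follows; i.e., no such analytic α, β exist. -/
/-!
After translating `t₀` to `0` and absorbing `x ^ (2k)` into `α`, the identity reads
`x ^ n * log² x = a x * log x + c x` with `a`, `c` analytic at `0`. For `n = 0`, dividing by
`log² x → ∞` gives `1 → 0`. For `n > 0`, since `x * logʲ x → 0`, letting `x → 0` first forces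
`a 0 = 0`, then `c 0 = 0`; dividing `a` and `c` by `x` lowers `n` by one.
-/

open Filter Real Topology

theorem AnalyticAt.dslope {𝕜 E : Type*} [NontriviallyNormedField 𝕜] [NormedAddCommGroup E]
    [NormedSpace 𝕜 E] {f : 𝕜 → E} {z : 𝕜} (hf : AnalyticAt 𝕜 f z) :
    AnalyticAt 𝕜 (dslope f z) z :=
  let ⟨_, hp⟩ := hf
  ⟨_, hp.has_fpower_series_dslope_fslope⟩

namespace Real

theorem tendsto_inv_log_nhdsNE_zero : Tendsto (fun x => (log x)⁻¹) (𝓝[≠] 0) (𝓝 0) :=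
  tendsto_inv_atBot_zero.comp tendsto_log_nhdsNE_zero

theorem tendsto_mul_log_pow_nhdsNE_zero (j : ℕ) :
    Tendsto (fun x => x * log x ^ j) (𝓝[≠] 0) (𝓝 0) := by
  have hpos : Tendsto (fun y => |log y| ^ (j : ℝ) / y ^ (-1 : ℝ)) (𝓝[>] 0) (𝓝 0) :=
    (isLittleO_abs_log_rpow_rpow_nhdsGT_zero j (by norm_num)).tendsto_div_nhds_zero
  rw [tendsto_zero_iff_norm_tendsto_zero]
  refine (hpos.comp tendsto_abs_nhdsNE_zero).congr' ?_
  filter_upwards [self_mem_nhdsWithin] with x hx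
  have hx : 0 < |x| := abs_pos.mpr hx
  simp [rpow_neg_one, norm_mul, log_abs, div_inv_eq_mul, mul_comm]

theorem tendsto_pow_succ_mul_log_pow_nhdsNE_zero (n j : ℕ) :
    Tendsto (fun x => x ^ (n + 1) * log x ^ j) (𝓝[≠] 0) (𝓝 0) := by
  have h := (((continuous_pow n).tendsto 0).mono_left nhdsWithin_le_nhds).mul
    (tendsto_mul_log_pow_nhdsNE_zero j)
  simpa only [mul_zero, pow_succ, mul_assoc] using h

end Real

theorem not_eventually_pow_mul_log_sq_eq (n : ℕ) {a c : ℝ → ℝ} (ha : AnalyticAt ℝ a 0)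
    (hc : AnalyticAt ℝ c 0) :
    ¬ ∀ᶠ x in 𝓝[≠] 0, x ^ n * log x ^ 2 = a x * log x + c x := by
  have hlog : ∀ᶠ x in 𝓝[≠] (0 : ℝ), log x ≠ 0 := tendsto_log_nhdsNE_zero.eventually_ne_atBot 0
  induction n generalizing a c with
  | zero =>
    intro hev
    have h := (ha.continuousAt.continuousWithinAt.tendsto.mul tendsto_inv_log_nhdsNE_zero).add
      ((hc.continuousAt.continuousWithinAt.tendsto.mul tendsto_inv_log_nhdsNE_zero).mul
        tendsto_inv_log_nhdsNE_zero)
    simp only [mul_zero, add_zero] at h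
    refine one_ne_zero (tendsto_nhds_unique (tendsto_const_nhds.congr' ?_) h)
    filter_upwards [hev, hlog] with x hx hx0
    field_simp
    linear_combination hx
  | succ n ih =>
    intro hev
    have ha0 : a 0 = 0 := by
      have h := (tendsto_pow_succ_mul_log_pow_nhdsNE_zero n 1).sub
        (hc.continuousAt.continuousWithinAt.tendsto.mul tendsto_inv_log_nhdsNE_zero)
      rw [mul_zero, sub_zero] at h
      refine tendsto_nhds_unique ha.continuousAt.continuousWithinAt (h.congr' ?_)
      filter_upwards [hev, hlog] with x hx hx0
      field_simp
      linear_combination hx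
    have hax (x : ℝ) : x * dslope a 0 x = a x := by
      simpa using sub_smul_dslope_of_zero ha0 x
    have hc0 : c 0 = 0 := by
      have h := (tendsto_pow_succ_mul_log_pow_nhdsNE_zero n 2).sub
        (ha.dslope.continuousAt.continuousWithinAt.tendsto.mul (tendsto_mul_log_pow_nhdsNE_zero 1))
      rw [mul_zero, sub_zero] at h
      refine tendsto_nhds_unique hc.continuousAt.continuousWithinAt (h.congr' ?_)
      filter_upwards [hev] with x hx
      linear_combination hx - log x * hax x
    have hcx (x : ℝ) : x * dslope c 0 x = c x := by
      simpa using sub_smul_dslope_of_zero hc0 x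
    refine ih ha.dslope hc.dslope ?_
    filter_upwards [hev, self_mem_nhdsWithin] with x hx hx0
    refine mul_left_cancel₀ (show x ≠ 0 from hx0) ?_
    linear_combination hx - log x * hax x - hcx x

theorem tps_no_quadratic_identity_general
    (k : ℕ) (t₀ : ℝ)
    (g α β : ℝ → ℝ)
    (hg : ∀ t, g t = (t - t₀) ^ (2 * k) * Real.log |t - t₀|)
    (hα : AnalyticAt ℝ α t₀) (hβ : AnalyticAt ℝ β t₀)
    (hid : ∀ᶠ t in nhds t₀, g t ^ 2 = α t * g t + β t) :
    False := by
  have hshift : AnalyticAt ℝ (· + t₀) 0 := analyticAt_id.add analyticAt_const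
  have hα' : AnalyticAt ℝ (fun x => α (x + t₀) * x ^ (2 * k)) 0 :=
    (hα.comp_of_eq hshift (zero_add t₀)).mul (analyticAt_id.pow _)
  have hβ' : AnalyticAt ℝ (fun x => β (x + t₀)) 0 := hβ.comp_of_eq hshift (zero_add t₀)
  refine not_eventually_pow_mul_log_sq_eq (4 * k) hα' hβ' ?_
  have hid' := ((continuous_add_const t₀).tendsto' 0 t₀ (zero_add t₀)).eventually hid
  filter_upwards [nhdsWithin_le_nhds hid'] with x hx
  simp only [hg, add_sub_cancel_right, log_abs] at hx
  linear_combination hx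

theorem tps_no_quadratic_identity
    (k : ℕ) (hk : 1 ≤ k) (t₀ : ℝ)
    (g α β : ℝ → ℝ)
    (hg : ∀ t, g t = (t - t₀) ^ (2 * k) * Real.log |t - t₀|)
    (hα : AnalyticAt ℝ α t₀) (hβ : AnalyticAt ℝ β t₀)
    (hid : ∀ᶠ t in nhds t₀, g t ^ 2 = α t * g t + β t) :
    False :=
  tps_no_quadratic_identity_general k t₀ g α β hg hα hβ hid
end

section
/- Suppose g: U → ℝ satisfies g² = αg + β near t₀ with α, β real analytic, g(t₀) = 0, and g real-valued. Then the discriminant Δ = α² + 4β satisfies Δ(t₀) = 0. -/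
lemma my_analyticAt_sqrt {x : ℝ} (hx : 0 < x) : AnalyticAt ℝ Real.sqrt x := by
  have h1 : AnalyticAt ℂ (fun z : ℂ => z ^ (1/2 : ℂ)) (x : ℂ) := by
    apply AnalyticAt.cpow analyticAt_id analyticAt_const
    exact Complex.ofReal_mem_slitPlane.2 hx
  have h2 : AnalyticAt ℝ (fun y : ℝ => (((y : ℂ)) ^ (1/2 : ℂ)).re) x :=
    (Complex.reCLM.analyticAt _).comp
      ((h1.restrictScalars).comp (Complex.ofRealCLM.analyticAt x))
  apply h2.congr
  filter_upwards [eventually_gt_nhds hx] with y hy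
  rw [show (1/2 : ℂ) = ((1/2 : ℝ) : ℂ) by norm_num, ← Complex.ofReal_cpow hy.le,
    Complex.ofReal_re, ← Real.sqrt_eq_rpow]

lemma my_sign_lock {U : Set ℝ} (hU : IsPreconnected U) {t₀ : ℝ} (ht₀ : t₀ ∈ U)
    {f : ℝ → ℝ} (hf : ContinuousOn f U) (hne : ∀ t ∈ U, f t ≠ 0)
    (h0 : 0 < f t₀) : ∀ t ∈ U, 0 < f t := by
  intro t ht
  by_contra h
  push_neg at h
  have : (0 : ℝ) ∈ Set.Icc (f t) (f t₀) := ⟨h, h0.le⟩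
  obtain ⟨s, hs, hfs⟩ := hU.intermediate_value ht ht₀ hf this
  exact hne s hs hfs

theorem discriminant_vanishes_at_singularity
    (t₀ : ℝ) (g α β : ℝ → ℝ)
    (hα : AnalyticAt ℝ α t₀) (hβ : AnalyticAt ℝ β t₀)
    (hid : ∀ᶠ t in nhds t₀, g t ^ 2 - α t * g t - β t = 0)
    (hgc : ∀ᶠ t in nhds t₀, ContinuousAt g t)
    (hg0 : g t₀ = 0)
    (hgsing : ¬ AnalyticAt ℝ g t₀) :
    α t₀ ^ 2 + 4 * β t₀ = 0 := by
  have hβ0 : β t₀ = 0 := by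
    have := hid.self_of_nhds
    rw [hg0] at this; linarith
  by_contra hΔ0
  set Δ : ℝ → ℝ := fun t => α t ^ 2 + 4 * β t with hΔdef
  have hΔa : AnalyticAt ℝ Δ t₀ := (hα.pow 2).add ((analyticAt_const).mul hβ)
  have hΔpos : 0 < Δ t₀ := by
    have : Δ t₀ = α t₀ ^ 2 + 4 * β t₀ := rfl
    rcases lt_or_eq_of_le (sq_nonneg (α t₀)) with h | h
    · simpa [hΔdef, hβ0] using h
    · exact absurd (by simp [hΔdef, hβ0, ← h]) hΔ0
  have hΔev : ∀ᶠ t in nhds t₀, 0 < Δ t :=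
    hΔa.continuousAt.eventually (eventually_gt_nhds hΔpos)
  have hαc : ∀ᶠ t in nhds t₀, ContinuousAt α t :=
    (hα.eventually_analyticAt).mono fun t h => h.continuousAt
  -- combine
  obtain ⟨ε, hε, hball⟩ := Metric.eventually_nhds_iff_ball.1
    (hid.and (hgc.and (hαc.and hΔev)))
  set U := Metric.ball t₀ ε with hU
  have ht₀U : t₀ ∈ U := Metric.mem_ball_self hε
  have hUconn : IsPreconnected U := (convex_ball t₀ ε).isPreconnected
  set f : ℝ → ℝ := fun t => 2 * g t - α t with hfdef
  have hfc : ContinuousOn f U := by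
    intro t ht
    have h1 : ContinuousAt f t :=
      ContinuousAt.sub (((hball t ht).2.1 : ContinuousAt g t).const_mul 2) (hball t ht).2.2.1
    exact h1.continuousWithinAt
  have hfsq : ∀ t ∈ U, f t ^ 2 = Δ t := by
    intro t ht
    have h1 := (hball t ht).1
    simp only [hfdef, hΔdef]; ring_nf; ring_nf at h1; nlinarith [h1]
  have hfne : ∀ t ∈ U, f t ≠ 0 := by
    intro t ht h
    have := hfsq t ht
    rw [h] at this
    have := (hball t ht).2.2.2
    nlinarith
  have hft₀ : f t₀ = - α t₀ := by simp [hfdef, hg0]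
  have hsqa : AnalyticAt ℝ (fun t => Real.sqrt (Δ t)) t₀ :=
    (my_analyticAt_sqrt hΔpos).comp hΔa
  rcases (hfne t₀ ht₀U).lt_or_gt with hneg | hpos
  · -- f < 0 on U, g = (α - sqrt Δ)/2
    have hposU : ∀ t ∈ U, 0 < -f t := by
      have := my_sign_lock hUconn ht₀U (hfc.neg) (fun t ht h => hfne t ht (by linarith [neg_eq_zero.1 h]))
        (by simpa using hneg)
      simpa using this
    apply hgsing
    have hGa : AnalyticAt ℝ (fun t => (α t - Real.sqrt (Δ t)) / 2) t₀ :=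
      (hα.sub hsqa).div analyticAt_const (by norm_num)
    apply hGa.congr
    filter_upwards [Metric.ball_mem_nhds t₀ hε] with t ht
    have h1 : Real.sqrt (Δ t) = - f t := by
      rw [← hfsq t ht, show f t ^ 2 = (-f t) ^ 2 by ring,
        Real.sqrt_sq (hposU t ht).le]
    simp only [h1, hfdef]; ring
  · have hposU : ∀ t ∈ U, 0 < f t := my_sign_lock hUconn ht₀U hfc hfne hpos
    apply hgsing
    have hGa : AnalyticAt ℝ (fun t => (α t + Real.sqrt (Δ t)) / 2) t₀ :=
      (hα.add hsqa).div analyticAt_const (by norm_num)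
    apply hGa.congr
    filter_upwards [Metric.ball_mem_nhds t₀ hε] with t ht
    have h1 : Real.sqrt (Δ t) = f t := by
      rw [← hfsq t ht, Real.sqrt_sq (hposU t ht).le]
    simp only [h1, hfdef]; ring
end

section
/- Let x₁, …, xₙ be distinct points of an open set Ω ⊆ ℝ^d, and φⱼ(x) = φ(‖x − xⱼ‖₂) with φ(r) = r^{2k} log r (thin-plate spline, φ(0)=0). Then each φⱼ is real analytic on Ω \ {xⱼ}, and the functions φ₁, …, φₙ are linearly independent on Ω. -/
/-!
Away from its centre, `‖y - xⱼ‖ ^ (2k) * log ‖y - xⱼ‖ = q ^ k * log q / 2` with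
`q = ‖y - xⱼ‖ ^ 2` a polynomial, so `φⱼ` is analytic there. At the centre it is not: along a
line through `xⱼ` it becomes `t ^ (2k) * log t` for `t > 0`, and writing an analytic function as
`t ^ m * g t` with `g 0 ≠ 0` would make `t ^ (2k - m) * log t` tend to `g 0 ≠ 0`, which no power
of `t` times `log t` does. So if `∑ cᵢ φᵢ = 0` near `xⱼ` with `cⱼ ≠ 0`, then
`φⱼ = -cⱼ⁻¹ ∑_{i ≠ j} cᵢ φᵢ` would be analytic at `xⱼ`.
-/

open Filter Topology

section InnerProductSpace

variable {E : Type*} [NormedAddCommGroup E] [InnerProductSpace ℝ E]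

theorem analyticAt_norm_sub_sq (z y : E) : AnalyticAt ℝ (fun w => ‖w - z‖ ^ 2) y := by
  have hpair : AnalyticAt ℝ (fun w : E => (w - z, w - z)) y := by fun_prop
  refine (((innerSL ℝ (E := E)).analyticAt_bilinear _).comp hpair).congr ?_
  exact .of_forall fun w => real_inner_self_eq_norm_sq (w - z)

theorem analyticAt_norm_sub_pow_two_mul_mul_log (k : ℕ) {z y : E} (hy : y ≠ z) :
    AnalyticAt ℝ (fun w => ‖w - z‖ ^ (2 * k) * Real.log ‖w - z‖) y := by
  have hq := analyticAt_norm_sub_sq z y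
  have hpos : 0 < ‖y - z‖ ^ 2 := by positivity [sub_ne_zero.2 hy]
  have hlog : AnalyticAt ℝ (fun w => Real.log (‖w - z‖ ^ 2) / 2) y :=
    ((analyticAt_log hpos).comp (f := fun w => ‖w - z‖ ^ 2) hq).div_const
  have h : AnalyticAt ℝ (fun w => (‖w - z‖ ^ 2) ^ k * (Real.log (‖w - z‖ ^ 2) / 2)) y :=
    (hq.pow k).mul hlog
  refine h.congr (.of_forall fun w => ?_)
  dsimp only
  rw [Real.log_pow, ← pow_mul]
  push_cast
  ring

end InnerProductSpace

theorem not_tendsto_zpow_mul_log_nhdsGT_zero (p : ℤ) {a : ℝ} (ha : a ≠ 0) :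
    ¬ Tendsto (fun t => t ^ p * Real.log t) (𝓝[>] 0) (𝓝 a) := by
  rcases lt_or_ge 0 p with hp | hp
  · intro h
    have hzero : Tendsto (fun t : ℝ => t ^ p * Real.log t) (𝓝[>] 0) (𝓝 0) := by
      refine (tendsto_log_mul_rpow_nhdsGT_zero (Int.cast_pos.2 hp)).congr fun t => ?_
      rw [Real.rpow_intCast, mul_comm]
    exact ha (tendsto_nhds_unique h hzero)
  · refine not_tendsto_nhds_of_tendsto_atBot ?_ a
    refine tendsto_atBot_mono' _ ?_ Real.tendsto_log_nhdsGT_zero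
    filter_upwards [Ioo_mem_nhdsGT one_pos] with t ⟨ht0, ht1⟩
    have hlog : Real.log t < 0 := Real.log_neg ht0 ht1
    have hpow : 1 ≤ t ^ p := one_le_zpow_of_nonpos₀ ht0 ht1.le hp
    nlinarith

theorem not_eventuallyEq_pow_mul_log_of_analyticAt {G : ℝ → ℝ} (hG : AnalyticAt ℝ G 0)
    (n : ℕ) : ¬ G =ᶠ[𝓝[>] 0] fun t => t ^ n * Real.log t := by
  intro hGe
  have hG_ne_zero : ¬ ∀ᶠ t in 𝓝 0, G t = 0 := by
    intro hzero
    have hzero' : ∀ᶠ t in 𝓝[>] 0, G t = 0 := nhdsWithin_le_nhds hzero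
    obtain ⟨t, hGt, hGt', ht0, ht1⟩ := (hzero'.and (hGe.and (Ioo_mem_nhdsGT one_pos))).exists
    rw [hGt, eq_comm] at hGt'
    exact mul_ne_zero (pow_ne_zero n ht0.ne') (Real.log_neg ht0 ht1).ne hGt'
  obtain ⟨m, g, hg, hg0, hGg⟩ := hG.exists_eventuallyEq_pow_smul_nonzero_iff.2 hG_ne_zero
  refine not_tendsto_zpow_mul_log_nhdsGT_zero ((n : ℤ) - m) hg0 ?_
  refine (hg.continuousAt.tendsto.mono_left nhdsWithin_le_nhds).congr' ?_
  filter_upwards [nhdsWithin_le_nhds hGg, hGe, self_mem_nhdsWithin] with t hGt hGt' ht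
  have ht0 : t ≠ 0 := ne_of_gt ht
  rw [hGt', sub_zero, smul_eq_mul] at hGt
  rw [zpow_sub₀ ht0, zpow_natCast, zpow_natCast, div_mul_eq_mul_div, hGt,
    mul_div_cancel_left₀ _ (pow_ne_zero m ht0)]

theorem not_analyticAt_norm_sub_pow_mul_log {E : Type*} [NormedAddCommGroup E]
    [NormedSpace ℝ E] [Nontrivial E] (n : ℕ) (z : E) :
    ¬ AnalyticAt ℝ (fun w => ‖w - z‖ ^ n * Real.log ‖w - z‖) z := by
  intro h
  obtain ⟨v, hv⟩ := exists_norm_eq E zero_le_one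
  have hline : AnalyticAt ℝ (fun t : ℝ => z + t • v) 0 := by fun_prop
  refine not_eventuallyEq_pow_mul_log_of_analyticAt (h.comp_of_eq hline (by simp)) n ?_
  filter_upwards [self_mem_nhdsWithin] with t (ht : 0 < t)
  simp [norm_smul, hv, abs_of_pos ht]

theorem eq_zero_of_eventually_sum_mul_eq_zero {𝕜 E ι : Type*} [NontriviallyNormedField 𝕜]
    [NormedAddCommGroup E] [NormedSpace 𝕜 E] [Fintype ι] [DecidableEq ι] {f : ι → E → 𝕜}
    {c : ι → 𝕜} {x : E} {j : ι} (hsum : ∀ᶠ y in 𝓝 x, ∑ i, c i * f i y = 0)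
    (hf : ∀ i ≠ j, AnalyticAt 𝕜 (f i) x) (hfj : ¬ AnalyticAt 𝕜 (f j) x) : c j = 0 := by
  by_contra hcj
  have hrest : AnalyticAt 𝕜 (fun y => ∑ i ∈ Finset.univ.erase j, c i * f i y) x :=
    Finset.analyticAt_fun_sum _ fun i hi => analyticAt_const.mul (hf i (Finset.ne_of_mem_erase hi))
  have hcombination : AnalyticAt 𝕜 (fun y => -(c j)⁻¹ * ∑ i ∈ Finset.univ.erase j, c i * f i y) x :=
    analyticAt_const.mul hrest
  refine hfj (hcombination.congr ?_)
  filter_upwards [hsum] with y hy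
  rw [← Finset.add_sum_erase _ _ (Finset.mem_univ j)] at hy
  rw [eq_neg_of_add_eq_zero_right hy, neg_mul_neg, inv_mul_cancel_left₀ hcj]

theorem tps_basis_analytic_and_linearly_independent_general
    (d n k : ℕ) (hd : 1 ≤ d)
    (Ω : Set (EuclideanSpace ℝ (Fin d))) (hΩ : IsOpen Ω)
    (x : Fin n → EuclideanSpace ℝ (Fin d))
    (hx : ∀ j, x j ∈ Ω) (hinj : Function.Injective x)
    (φ : Fin n → EuclideanSpace ℝ (Fin d) → ℝ)
    (hφ : ∀ j y, φ j y = ‖y - x j‖ ^ (2 * k) * Real.log ‖y - x j‖) :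
    (∀ j, AnalyticOnNhd ℝ (φ j) (Ω \ {x j})) ∧
      ∀ c : Fin n → ℝ, (∀ y ∈ Ω, ∑ j, c j * φ j y = 0) → ∀ j, c j = 0 := by
  have hφ_eq : ∀ j, φ j = fun y => ‖y - x j‖ ^ (2 * k) * Real.log ‖y - x j‖ :=
    fun j => funext (hφ j)
  have hanalytic : ∀ j y, y ≠ x j → AnalyticAt ℝ (φ j) y := fun j y hy => by
    rw [hφ_eq j]
    exact analyticAt_norm_sub_pow_two_mul_mul_log k hy
  refine ⟨fun j y hy => hanalytic j y hy.2, fun c hc j => ?_⟩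
  have : Nonempty (Fin d) := ⟨⟨0, hd⟩⟩
  refine eq_zero_of_eventually_sum_mul_eq_zero (eventually_of_mem (hΩ.mem_nhds (hx j)) hc)
    (fun i hi => hanalytic i (x j) (hinj.ne hi).symm) ?_
  rw [hφ_eq j]
  exact not_analyticAt_norm_sub_pow_mul_log (2 * k) (x j)

theorem tps_basis_analytic_and_linearly_independent
    (d n k : ℕ) (hd : 1 ≤ d) (hk : 1 ≤ k)
    (Ω : Set (EuclideanSpace ℝ (Fin d))) (hΩ : IsOpen Ω)
    (x : Fin n → EuclideanSpace ℝ (Fin d))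
    (hx : ∀ j, x j ∈ Ω) (hinj : Function.Injective x)
    (φ : Fin n → EuclideanSpace ℝ (Fin d) → ℝ)
    (hφ : ∀ j y, φ j y = ‖y - x j‖ ^ (2 * k) * Real.log ‖y - x j‖) :
    (∀ j, AnalyticOnNhd ℝ (φ j) (Ω \ {x j})) ∧
      ∀ c : Fin n → ℝ, (∀ y ∈ Ω, ∑ j, c j * φ j y = 0) → ∀ j, c j = 0 :=
  tps_basis_analytic_and_linearly_independent_general d n k hd Ω hΩ x hx hinj φ hφ
end

section
/- Let f be a real analytic function on an open connected set U ⊆ ℝ^d that is not identically zero. Then the zero set {x ∈ U : f(x) = 0} has Lebesgue measure zero. -/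
/-!
By the identity theorem `f` does not vanish near any point of the connected set `U`, so at a zero
`x` some homogeneous term of the Taylor series of `f` is nonzero; let `q` be the lowest one and
`k` its degree. As `f (x + y) - q y = o(‖y‖ ^ k)`, `f (x + y) ≠ 0` for small `y` in the open cone
`{y | c ‖y‖ ^ k < ‖q y‖}`. Scaling shows that this cone fills a fixed positive proportion of every
ball around `x`, so `x` is not a Lebesgue density point of the zero set; but almost every point of
a set of positive measure is one.
-/

open MeasureTheory Metric Filter Set Asymptotics
open scoped Topology ENNReal Pointwise

section Analytic

variable {E F : Type*} [NormedAddCommGroup E] [NormedSpace ℝ E] [NormedAddCommGroup F]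
  [NormedSpace ℝ F] {f : E → F} {p : FormalMultilinearSeries ℝ E F} {x : E}

theorem HasFPowerSeriesAt.exists_apply_ne_zero (hp : HasFPowerSeriesAt f p x)
    (hf : ¬ f =ᶠ[𝓝 x] 0) : ∃ n y, p n (fun _ => y) ≠ 0 := by
  by_contra! hzero
  refine hf ?_
  filter_upwards [hp.eventually_hasSum_sub] with y hy
  simp only [hzero] at hy
  exact hy.unique hasSum_zero

theorem HasFPowerSeriesAt.isLittleO_sub_apply_of_forall_lt {k : ℕ} (hp : HasFPowerSeriesAt f p x)
    (hlow : ∀ m < k, ∀ y, p m (fun _ => y) = 0) :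
    (fun y => f (x + y) - p k (fun _ => y)) =o[𝓝 0] fun y => ‖y‖ ^ k := by
  have hpartial : ∀ y, p.partialSum (k + 1) y = p k (fun _ => y) := fun y => by
    rw [FormalMultilinearSeries.partialSum, Finset.sum_range_succ,
      Finset.sum_eq_zero fun m hm => hlow m (Finset.mem_range.mp hm) y, zero_add]
  simp_rw [← hpartial]
  exact (hp.isBigO_sub_partialSum_pow (k + 1)).trans_isLittleO
    ((isLittleO_pow_pow (𝕜 := ℝ) (lt_add_one k)).comp_tendsto tendsto_norm_zero)

theorem HasFPowerSeriesAt.exists_cone_ne_zero (hp : HasFPowerSeriesAt f p x)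
    (hne : ∃ n y, p n (fun _ => y) ≠ 0) :
    ∃ W : Set E, IsOpen W ∧ W.Nonempty ∧ (∀ r : ℝ, 0 < r → r • W ⊆ W) ∧
      ∀ᶠ y in 𝓝 0, y ∈ W → f (x + y) ≠ 0 := by
  classical
  set k := Nat.find hne
  obtain ⟨v, hv⟩ := Nat.find_spec hne
  have hlow : ∀ m < k, ∀ y, p m (fun _ => y) = 0 := fun m hm y => by
    by_contra h
    exact (Nat.find_min hne hm) ⟨y, h⟩
  set q : E → F := fun y => p k (fun _ => y)
  have hq_smul : ∀ (r : ℝ) y, q (r • y) = r ^ k • q y := fun r y => by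
    simpa using (p k).map_smul_univ (fun _ => r) (fun _ => y)
  -- any `c ∈ (0, ‖q v‖ / ‖v‖ ^ k)` works; the `+ 1` spares proving `v ≠ 0`
  set c := ‖q v‖ / (‖v‖ ^ k + 1)
  have hc : 0 < c := by positivity
  refine ⟨{y | c * ‖y‖ ^ k < ‖q y‖}, ?_, ⟨v, ?_⟩, ?_, ?_⟩
  · exact isOpen_lt (by fun_prop)
      ((p k).cont.comp (continuous_pi fun _ => continuous_id)).norm
  · show c * ‖v‖ ^ k < ‖q v‖
    rw [div_mul_eq_mul_div, div_lt_iff₀ (by positivity)]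
    nlinarith [norm_pos_iff.mpr hv]
  · rintro r hr _ ⟨y, hy, rfl⟩
    show c * ‖r • y‖ ^ k < ‖q (r • y)‖
    rw [hq_smul, norm_smul, norm_smul, Real.norm_of_nonneg hr.le, mul_pow, norm_pow,
      Real.norm_of_nonneg hr.le, mul_left_comm]
    exact mul_lt_mul_of_pos_left hy (pow_pos hr k)
  · filter_upwards [(hp.isLittleO_sub_apply_of_forall_lt hlow).def hc] with y hy hyW hzero
    rw [hzero, zero_sub, norm_neg, norm_pow, norm_norm] at hy
    exact (hyW.trans_le hy).false

end Analytic

section Cone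

variable {E : Type*} [NormedAddCommGroup E] [NormedSpace ℝ E] [FiniteDimensional ℝ E]
  [MeasurableSpace E] [BorelSpace E] (μ : Measure E) [μ.IsAddHaarMeasure] {W s : Set E}

theorem addHaar_cone_inter_ball_le (hW : ∀ r : ℝ, 0 < r → r • W ⊆ W) {r : ℝ} (hr : 0 < r) :
    ENNReal.ofReal (r ^ Module.finrank ℝ E) * μ (W ∩ ball 0 1) ≤ μ (W ∩ ball 0 r) := by
  rw [← Measure.addHaar_smul_of_nonneg μ hr.le]
  exact measure_mono (smul_set_inter_subset.trans
    (inter_subset_inter (hW r hr) (smul_unitBall_of_pos hr).le))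

theorem measure_inter_closedBall_div_le_of_cone (hWm : MeasurableSet W)
    (hW : ∀ r : ℝ, 0 < r → r • W ⊆ W) {x : E} {r : ℝ} (hr : 0 < r)
    (hs : ∀ y ∈ W ∩ ball 0 r, x + y ∉ s) :
    μ (s ∩ closedBall x r) / μ (closedBall x r) ≤ 1 - μ (W ∩ ball 0 1) / μ (ball 0 1) := by
  set R := ENNReal.ofReal (r ^ Module.finrank ℝ E)
  have hR : R ≠ 0 := (ENNReal.ofReal_pos.mpr (by positivity)).ne'
  have hball : μ (closedBall x r) = R * μ (ball 0 1) :=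
    Measure.addHaar_closedBall μ x hr.le
  set T := x +ᵥ (W ∩ ball 0 r)
  have hdisj : Disjoint (s ∩ closedBall x r) T := by
    refine disjoint_left.mpr ?_
    rintro _ hz ⟨y, hy, rfl⟩
    exact hs y hy hz.1
  have hsub : T ⊆ closedBall x r := by
    rintro _ ⟨y, hy, rfl⟩
    simpa [dist_eq_norm] using (mem_ball_zero_iff.mp hy.2).le
  have hsum : μ (s ∩ closedBall x r) + R * μ (W ∩ ball 0 1) ≤ R * μ (ball 0 1) :=
    calc μ (s ∩ closedBall x r) + R * μ (W ∩ ball 0 1)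
        ≤ μ (s ∩ closedBall x r) + μ T := by
          rw [measure_vadd]
          gcongr
          exact addHaar_cone_inter_ball_le μ hW hr
      _ = μ (s ∩ closedBall x r ∪ T) :=
          (measure_union hdisj ((hWm.inter measurableSet_ball).const_vadd x)).symm
      _ ≤ μ (closedBall x r) := measure_mono (union_subset inter_subset_right hsub)
      _ = R * μ (ball 0 1) := hball
  have hratio : μ (W ∩ ball 0 1) / μ (ball 0 1) ≤ 1 :=
    ENNReal.div_le_of_le_mul (by rw [one_mul]; exact measure_mono inter_subset_right)
  rw [ENNReal.le_sub_iff_add_le_right (ne_top_of_le_ne_top ENNReal.one_ne_top hratio) hratio,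
    hball, ← ENNReal.mul_div_mul_left (μ (W ∩ ball 0 1)) _ hR ENNReal.ofReal_ne_top,
    ENNReal.div_add_div_same]
  exact ENNReal.div_le_of_le_mul (by rwa [one_mul])

theorem addHaar_eq_zero_of_forall_cone
    (h : ∀ x ∈ s, ∃ W : Set E, IsOpen W ∧ W.Nonempty ∧ (∀ r : ℝ, 0 < r → r • W ⊆ W) ∧
      ∀ᶠ y in 𝓝 0, y ∈ W → x + y ∉ s) :
    μ s = 0 := by
  by_contra hμs
  obtain ⟨x, hxs, hdensity⟩ :=
    Measure.exists_mem_of_measure_ne_zero_of_ae hμs (Besicovitch.ae_tendsto_measure_inter_div μ s)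
  obtain ⟨W, hWo, ⟨w, hw⟩, hW, hWs⟩ := h x hxs
  obtain ⟨t, ht, hts⟩ := eventually_nhds_iff_ball.mp hWs
  have hW_ball : (W ∩ ball 0 1).Nonempty := by
    refine ⟨(‖w‖ + 1)⁻¹ • w, hW _ (by positivity) (smul_mem_smul_set hw), ?_⟩
    rw [mem_ball_zero_iff, norm_smul, Real.norm_of_nonneg (by positivity), inv_mul_eq_div,
      div_lt_one (by positivity)]
    linarith
  have hpos : μ (W ∩ ball 0 1) / μ (ball 0 1) ≠ 0 :=
    ENNReal.div_ne_zero.mpr ⟨((hWo.inter isOpen_ball).measure_pos μ hW_ball).ne',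
      measure_ball_lt_top.ne⟩
  have hle : (1 : ℝ≥0∞) ≤ 1 - μ (W ∩ ball 0 1) / μ (ball 0 1) := by
    refine le_of_tendsto hdensity ?_
    filter_upwards [Ioo_mem_nhdsGT ht] with r ⟨hr, hrt⟩
    exact measure_inter_closedBall_div_le_of_cone μ hWo.measurableSet hW hr
      fun y hy => hts y (ball_subset_ball hrt.le hy.2) hy.1
  exact hle.not_gt (ENNReal.sub_lt_self ENNReal.one_ne_top one_ne_zero hpos)

end Cone

theorem zero_set_analytic_measure_zero_general
    (d : ℕ) (U : Set (EuclideanSpace ℝ (Fin d)))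
    (hconn : IsConnected U)
    (f : EuclideanSpace ℝ (Fin d) → ℝ)
    (hf : AnalyticOnNhd ℝ f U)
    (hnz : ∃ x ∈ U, f x ≠ 0) :
    MeasureTheory.volume {x ∈ U | f x = 0} = 0 := by
  refine addHaar_eq_zero_of_forall_cone volume fun x ⟨hxU, _⟩ => ?_
  obtain ⟨p, hp⟩ := hf x hxU
  have hlocal : ¬ f =ᶠ[𝓝 x] 0 := fun hzero => by
    obtain ⟨z, hzU, hfz⟩ := hnz
    exact hfz (hf.eqOn_zero_of_preconnected_of_eventuallyEq_zero hconn.isPreconnected hxU hzero hzU)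
  obtain ⟨W, hWo, hWne, hW, hfW⟩ := hp.exists_cone_ne_zero (hp.exists_apply_ne_zero hlocal)
  exact ⟨W, hWo, hWne, hW, hfW.mono fun y hy hyW hzero => hy hyW hzero.2⟩

theorem zero_set_analytic_measure_zero
    (d : ℕ) (U : Set (EuclideanSpace ℝ (Fin d)))
    (hU : IsOpen U) (hconn : IsConnected U)
    (f : EuclideanSpace ℝ (Fin d) → ℝ)
    (hf : AnalyticOnNhd ℝ f U)
    (hnz : ∃ x ∈ U, f x ≠ 0) :
    MeasureTheory.volume {x ∈ U | f x = 0} = 0 :=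
  zero_set_analytic_measure_zero_general d U hconn f hf hnz
end
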